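/- Let X₁,…,Xₙ be m×m complex matrices satisfying [Xᵢ,Xⱼ] = 0 for all i,j and Σᵢ [Xᵢ†,Xᵢ] = 0. Then each Xᵢ is a normal matrix, i.e. [Xᵢ†,Xᵢ] = 0 for every i, and moreover [Xᵢ,Xⱼ†] = 0 for all i,j. -/
import Mathlib

open scoped BigOperators Matrix

private lemma trace_hs {m : ℕ} (A : Matrix (Fin m) (Fin m) ℂ) :
    Matrix.trace (Aᴴ * A) = ((∑ i, ∑ j, Complex.normSq (A i j) : ℝ) : ℂ) := by
  simp only [Matrix.trace, Matrix.diag, Matrix.mul_apply, Matrix.conjTranspose_apply]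
  push_cast
  rw [Finset.sum_comm]
  congr 1; ext i; congr 1; ext j
  simp [Complex.normSq_eq_conj_mul_self]

private lemma key {m : ℕ} {k : ℕ} (A : Fin k → Matrix (Fin m) (Fin m) ℂ)
    (h : ∑ i, Matrix.trace ((A i)ᴴ * A i) = 0) : ∀ i, A i = 0 := by
  have h2 : ∑ i, ((∑ p, ∑ q, Complex.normSq (A i p q) : ℝ) : ℂ) = 0 := by
    simpa [trace_hs] using h
  rw [← Complex.ofReal_sum] at h2
  have h3 : ∑ i, ∑ p, ∑ q, Complex.normSq (A i p q) = 0 := by exact_mod_cast h2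
  intro i
  ext p q
  have nn1 : ∀ i ∈ Finset.univ, (0:ℝ) ≤ ∑ p, ∑ q, Complex.normSq (A i p q) :=
    fun i _ => Finset.sum_nonneg fun p _ => Finset.sum_nonneg fun q _ => Complex.normSq_nonneg _
  have := (Finset.sum_eq_zero_iff_of_nonneg nn1).mp h3 i (Finset.mem_univ i)
  have := (Finset.sum_eq_zero_iff_of_nonneg
    (fun p _ => Finset.sum_nonneg fun q _ => Complex.normSq_nonneg _)).mp this p (Finset.mem_univ p)
  have := (Finset.sum_eq_zero_iff_of_nonneg
    (fun q _ => Complex.normSq_nonneg _)).mp this q (Finset.mem_univ q)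
  simpa using Complex.normSq_eq_zero.mp this

private lemma cyc4 {m : ℕ} (A B C D : Matrix (Fin m) (Fin m) ℂ) :
    Matrix.trace (A * (B * (C * D))) = Matrix.trace (B * (C * (D * A))) := by
  rw [Matrix.trace_mul_comm]; simp [Matrix.mul_assoc]

/-- If `X₁,…,Xₙ` are pairwise commuting `m×m` complex matrices with
`Σᵢ [Xᵢᴴ, Xᵢ] = 0`, then each `Xᵢ` is normal and moreover `[Xᵢ, Xⱼᴴ] = 0` for all `i,j`. -/
theorem commuting_zero_moment_map_normal {n m : ℕ}
    (X : Fin n → Matrix (Fin m) (Fin m) ℂ)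
    (hcomm : ∀ i j, X i * X j = X j * X i)
    (hD : ∑ i, ((X i)ᴴ * X i - X i * (X i)ᴴ) = 0) :
    (∀ i, (X i)ᴴ * X i = X i * (X i)ᴴ) ∧
    (∀ i j, X i * (X j)ᴴ = (X j)ᴴ * X i) := by
  have hP : ∑ i, (X i)ᴴ * X i = ∑ i, X i * (X i)ᴴ := by
    rw [← sub_eq_zero, ← Finset.sum_sub_distrib]; exact hD
  have hcomm' : ∀ i j (B : Matrix (Fin m) (Fin m) ℂ),
      X i * (X j * B) = X j * (X i * B) := fun i j B => by
    rw [← Matrix.mul_assoc, hcomm, Matrix.mul_assoc]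
  have main : ∀ i j, X i * (X j)ᴴ = (X j)ᴴ * X i := by
    intro i j
    set C : Fin n → Matrix (Fin m) (Fin m) ℂ :=
      fun i => X i * (X j)ᴴ - (X j)ᴴ * X i with hC
    have hzero : ∑ i, Matrix.trace ((C i)ᴴ * (C i)) = 0 := by
      have term : ∀ i, Matrix.trace ((C i)ᴴ * (C i)) =
          Matrix.trace ((X j)ᴴ * (X j * ((X i)ᴴ * X i)))
          - Matrix.trace ((X j)ᴴ * (X j * (X i * (X i)ᴴ)))
          - Matrix.trace (X j * ((X j)ᴴ * ((X i)ᴴ * X i)))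
          + Matrix.trace (X j * ((X j)ᴴ * (X i * (X i)ᴴ))) := by
        intro i
        have e1 : Matrix.trace (X j * ((X i)ᴴ * (X i * (X j)ᴴ))) =
            Matrix.trace ((X j)ᴴ * (X j * ((X i)ᴴ * X i))) := by
          rw [cyc4, cyc4, cyc4]
        have e2 : Matrix.trace (X j * ((X i)ᴴ * ((X j)ᴴ * X i))) =
            Matrix.trace ((X j)ᴴ * (X j * (X i * (X i)ᴴ))) := by
          rw [cyc4, cyc4, cyc4, hcomm' i j, cyc4, cyc4, cyc4]
        have e3 : Matrix.trace ((X i)ᴴ * (X j * (X i * (X j)ᴴ))) =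
            Matrix.trace (X j * ((X j)ᴴ * ((X i)ᴴ * X i))) := by
          rw [hcomm' j i, cyc4, cyc4]
        have e4 : Matrix.trace ((X i)ᴴ * (X j * ((X j)ᴴ * X i))) =
            Matrix.trace (X j * ((X j)ᴴ * (X i * (X i)ᴴ))) := by
          rw [cyc4]
        rw [hC]
        simp only [Matrix.conjTranspose_sub, Matrix.conjTranspose_mul,
          Matrix.conjTranspose_conjTranspose, Matrix.sub_mul, Matrix.mul_sub,
          Matrix.trace_sub, Matrix.mul_assoc]
        rw [e1, e2, e3, e4]
        ring
      rw [Finset.sum_congr rfl (fun i _ => term i)]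
      simp only [Finset.sum_add_distrib, Finset.sum_sub_distrib, ← Matrix.trace_sum,
        ← Finset.mul_sum, hP]
      ring
    have := key C hzero i
    rwa [hC, sub_eq_zero] at this
  exact ⟨fun i => by have := main i i; rw [this], main⟩
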